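/- Leading heat kernel coefficient a₀ of a non-Laplace type operator: under the projection hypotheses on the leading symbol A(ξ) = Σ_{i=1}^{s} μ_i‖ξ‖²Π_i(ξ), the matrix-valued function ξ ↦ exp(−A(ξ)) is integrable on ℝ^m∖{0} and π^{−m/2} ∫_{ℝ^m} exp(−A(ξ)) dξ = Σ_{i=1}^{s} μ_i^{−m/2} · ⟨Π_i⟩, where ⟨Π_i⟩ := π^{−m/2} ∫_{ℝ^m} e^{−‖ξ‖²} Π_i(ξ) dξ. In particular, taking traces, π^{−m/2} ∫_{ℝ^m} tr(exp(−A(ξ))) dξ = Σ_{i=1}^{s} d_i·μ_i^{−m/2}. -/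

import Mathlib

/-!
Off the origin the `Πᵢ(ξ)` form a complete family of orthogonal idempotents, so
`z ↦ ∑ zᵢ Πᵢ(ξ)` is a continuous algebra homomorphism `ℂˢ → M_d(ℂ)`; it commutes with `exp`, whence
`exp(-A(ξ)) = ∑ e^{-μᵢ‖ξ‖²} Πᵢ(ξ)`. The entries of `Πᵢ` are continuous off `0` and homogeneous of
degree zero, hence bounded, so each term is integrable, and the substitution `ξ = μᵢ^{-1/2} η`
leaves `Πᵢ` unchanged and produces the factor `μᵢ^{-m/2}`. For the trace, `tr Πᵢ = dᵢ` off `0`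
and `π^{-m/2} ∫ e^{-‖ξ‖²} dξ = 1`.
-/

open MeasureTheory Matrix

section OrthogonalIdempotents

variable {ι 𝔸 : Type*} [Fintype ι] [NormedRing 𝔸] [NormedAlgebra ℂ 𝔸] {P : ι → 𝔸}

def CompleteOrthogonalIdempotents.evalAlgHom (hP : CompleteOrthogonalIdempotents P) :
    (ι → ℂ) →ₐ[ℂ] 𝔸 :=
  AlgHom.ofLinearMap (Fintype.linearCombination ℂ P)
    (by simp [Fintype.linearCombination_apply, hP.complete])
    (fun z w => by
      classical
      simp only [Fintype.linearCombination_apply, Finset.sum_mul_sum, smul_mul_smul_comm,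
        hP.mul_eq, smul_ite, smul_zero, Finset.sum_ite_eq, Finset.mem_univ, if_true, Pi.mul_apply])

theorem CompleteOrthogonalIdempotents.exp_sum_smul [CompleteSpace 𝔸]
    (hP : CompleteOrthogonalIdempotents P) (z : ι → ℂ) :
    NormedSpace.exp (∑ i, z i • P i) = ∑ i, Complex.exp (z i) • P i := by
  have hcont : Continuous hP.evalAlgHom :=
    LinearMap.continuous_of_finiteDimensional hP.evalAlgHom.toLinearMap
  let _ : NormedAlgebra ℚ 𝔸 := NormedAlgebra.restrictScalars ℚ ℂ 𝔸
  have := NormedSpace.map_exp hP.evalAlgHom hcont z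
  simpa [CompleteOrthogonalIdempotents.evalAlgHom, Fintype.linearCombination_apply,
    Pi.exp_def, Complex.exp_eq_exp_ℂ] using this.symm

end OrthogonalIdempotents

section ZeroHomogeneous

variable {E F : Type*} [NormedAddCommGroup E] [NormedSpace ℝ E]

def IsZeroHomogeneous (g : E → F) : Prop :=
  ∀ c : ℝ, 0 < c → ∀ ξ, ξ ≠ 0 → g (c • ξ) = g ξ

theorem IsZeroHomogeneous.matrix_elem {n R : Type*} {Q : E → Matrix n n R}
    (hQ : IsZeroHomogeneous Q) (a b : n) : IsZeroHomogeneous fun ξ => Q ξ a b :=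
  fun c hc ξ hξ => congrArg (· a b) (hQ c hc ξ hξ)

theorem IsZeroHomogeneous.apply_smul {g : E → F} (hg : IsZeroHomogeneous g) {c : ℝ} (hc : 0 < c)
    (ξ : E) : g (c • ξ) = g ξ := by
  rcases eq_or_ne ξ 0 with rfl | hξ
  · rw [smul_zero]
  · exact hg c hc ξ hξ

variable [NormedAddCommGroup F] [FiniteDimensional ℝ E]

/-- A zero-homogeneous function takes on `{0}ᶜ` the values it takes on the compact unit sphere. -/
theorem IsZeroHomogeneous.exists_norm_le {g : E → F} (hg : IsZeroHomogeneous g)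
    (hcont : ContinuousOn g {0}ᶜ) : ∃ C, ∀ ξ, ξ ≠ 0 → ‖g ξ‖ ≤ C := by
  have hsphere : Metric.sphere (0 : E) 1 ⊆ {0}ᶜ := fun x hx h => by simp_all
  obtain ⟨C, hC⟩ := (isCompact_sphere (0 : E) 1).exists_bound_of_continuousOn (hcont.mono hsphere)
  refine ⟨C, fun ξ hξ => ?_⟩
  have hnorm : ‖ξ‖ ≠ 0 := norm_ne_zero_iff.mpr hξ
  rw [← hg ‖ξ‖⁻¹ (by positivity) ξ hξ]
  exact hC _ (by simp [norm_smul, hnorm])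

end ZeroHomogeneous

section Gaussian

variable {V : Type*} [NormedAddCommGroup V] [InnerProductSpace ℝ V] [FiniteDimensional ℝ V]
  [MeasurableSpace V] [BorelSpace V] {g : V → ℂ}

theorem integrable_exp_neg_mul_sq_norm {b : ℝ} (hb : 0 < b) :
    Integrable fun ξ : V => Real.exp (-(b * ‖ξ‖ ^ 2)) := by
  refine (GaussianFourier.integrable_cexp_neg_mul_sq_norm_add (V := V) (b := b)
    (by simpa using hb) 0 0).norm.congr (Filter.Eventually.of_forall fun ξ => ?_)
  simp [Complex.norm_exp, ← Complex.ofReal_pow]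

theorem IsZeroHomogeneous.integrable_gaussian_mul [Nontrivial V] (hg : IsZeroHomogeneous g)
    (hcont : ContinuousOn g {0}ᶜ) {b : ℝ} (hb : 0 < b) :
    Integrable fun ξ => ((Real.exp (-(b * ‖ξ‖ ^ 2)) : ℝ) : ℂ) * g ξ := by
  obtain ⟨C, hC⟩ := hg.exists_norm_le hcont
  have hmeas : AEStronglyMeasurable (fun ξ => ((Real.exp (-(b * ‖ξ‖ ^ 2)) : ℝ) : ℂ) * g ξ) := by
    rw [← restrict_compl_singleton (μ := volume) (0 : V)]
    exact (ContinuousOn.mul (by fun_prop) hcont).aestronglyMeasurable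
      isOpen_compl_singleton.measurableSet
  refine ((integrable_exp_neg_mul_sq_norm hb).const_mul C).mono' hmeas ?_
  filter_upwards [Measure.ae_ne volume (0 : V)] with ξ hξ
  rw [norm_mul, Complex.norm_real, Real.norm_of_nonneg (Real.exp_pos _).le, mul_comm]
  exact mul_le_mul_of_nonneg_right (hC ξ hξ) (Real.exp_pos _).le

/-- Substituting `ξ = b^{-1/2} η`. -/
theorem IsZeroHomogeneous.integral_gaussian_mul (hg : IsZeroHomogeneous g) {b : ℝ} (hb : 0 < b) :
    ∫ ξ, ((Real.exp (-(b * ‖ξ‖ ^ 2)) : ℝ) : ℂ) * g ξ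
      = ((b ^ (-(Module.finrank ℝ V : ℝ) / 2) : ℝ) : ℂ)
        * ∫ ξ, ((Real.exp (-‖ξ‖ ^ 2) : ℝ) : ℂ) * g ξ := by
  set R : ℝ := b ^ (-(1 : ℝ) / 2)
  have hR : 0 < R := Real.rpow_pos_of_pos hb _
  have hbR : b * R ^ 2 = 1 := by
    have hR2 : R ^ 2 = b⁻¹ := by
      rw [← Real.rpow_natCast, ← Real.rpow_mul hb.le, ← Real.rpow_neg_one]
      norm_num
    rw [hR2, mul_inv_cancel₀ hb.ne']
  have hRn : b ^ (-(Module.finrank ℝ V : ℝ) / 2) = R ^ Module.finrank ℝ V := by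
    rw [← Real.rpow_natCast, ← Real.rpow_mul hb.le]
    ring_nf
  have hscale := Measure.integral_comp_smul_of_nonneg (volume : Measure V)
    (fun ξ => ((Real.exp (-(b * ‖ξ‖ ^ 2)) : ℝ) : ℂ) * g ξ) R (hR := hR.le)
  simp only [hg.apply_smul hR, norm_smul, Real.norm_of_nonneg hR.le, mul_pow, ← mul_assoc,
    hbR, one_mul] at hscale
  rw [hscale, hRn, Complex.real_smul, ← mul_assoc, ← Complex.ofReal_mul,
    mul_inv_cancel₀ (pow_ne_zero _ hR.ne'), Complex.ofReal_one, one_mul]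

end Gaussian

theorem Matrix.integral_trace {X n R : Type*} [MeasurableSpace X] {ν : Measure X} [Fintype n]
    [NormedAddCommGroup R] [NormedSpace ℝ R] {f : X → Matrix n n R}
    (hf : ∀ a, Integrable (fun x => f x a a) ν) :
    ∫ x, (f x).trace ∂ν = ∑ a, ∫ x, f x a a ∂ν :=
  integral_finsetSum _ fun a _ => hf a

namespace NLT

/-- The leading symbol `A(ξ) = ∑ᵢ μᵢ ‖ξ‖² Πᵢ(ξ)` of a non-Laplace type operator. -/
noncomputable def leadSymb {m d s : ℕ} (μ : Fin s → ℝ)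
    (Pi : Fin s → EuclideanSpace ℝ (Fin m) → Matrix (Fin d) (Fin d) ℂ)
    (ξ : EuclideanSpace ℝ (Fin m)) : Matrix (Fin d) (Fin d) ℂ :=
  ∑ i, ((μ i * ‖ξ‖ ^ 2 : ℝ) : ℂ) • Pi i ξ

/-- The Gaussian average `⟨Πᵢ⟩ = π^{−m/2} ∫ e^{−‖ξ‖²} Πᵢ(ξ) dξ` (taken entrywise). -/
noncomputable def gaussAvg {m d : ℕ}
    (Q : EuclideanSpace ℝ (Fin m) → Matrix (Fin d) (Fin d) ℂ) :
    Matrix (Fin d) (Fin d) ℂ :=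
  Matrix.of fun a b => ((Real.pi ^ (-(m : ℝ) / 2) : ℝ) : ℂ)
    * ∫ ξ : EuclideanSpace ℝ (Fin m), ((Real.exp (-‖ξ‖ ^ 2) : ℝ) : ℂ) * Q ξ a b

variable {m d s : ℕ}

theorem exp_neg_leadSymb {μ : Fin s → ℝ}
    {Pi : Fin s → EuclideanSpace ℝ (Fin m) → Matrix (Fin d) (Fin d) ℂ}
    {ξ : EuclideanSpace ℝ (Fin m)} (hP : CompleteOrthogonalIdempotents (Pi · ξ)) :
    NormedSpace.exp (-leadSymb μ Pi ξ) = ∑ i, ((Real.exp (-(μ i * ‖ξ‖ ^ 2)) : ℝ) : ℂ) • Pi i ξ := by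
  simp only [leadSymb, ← Finset.sum_neg_distrib, ← neg_smul, ← Complex.ofReal_neg,
    Complex.ofReal_exp]
  open scoped Norms.Operator in
  exact hP.exp_sum_smul _

theorem integral_gaussian_eq_one :
    ((Real.pi ^ (-(m : ℝ) / 2) : ℝ) : ℂ)
      * ∫ ξ : EuclideanSpace ℝ (Fin m), ((Real.exp (-‖ξ‖ ^ 2) : ℝ) : ℂ) = 1 := by
  have h := GaussianFourier.integral_rexp_neg_mul_sq_norm (V := EuclideanSpace ℝ (Fin m)) one_pos
  simp only [neg_mul, one_mul, div_one, finrank_euclideanSpace_fin] at h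
  rw [integral_complex_ofReal, h, ← Complex.ofReal_mul, ← Real.rpow_add Real.pi_pos,
    neg_div, neg_add_cancel, Real.rpow_zero, Complex.ofReal_one]

theorem trace_gaussAvg [NeZero m] {Q : EuclideanSpace ℝ (Fin m) → Matrix (Fin d) (Fin d) ℂ}
    (hQ : ∀ a, Integrable fun ξ => ((Real.exp (-‖ξ‖ ^ 2) : ℝ) : ℂ) * Q ξ a a) {t : ℂ}
    (htr : ∀ ξ, ξ ≠ 0 → (Q ξ).trace = t) :
    (gaussAvg Q).trace = t := by
  have hae : (fun ξ => ∑ a, ((Real.exp (-‖ξ‖ ^ 2) : ℝ) : ℂ) * Q ξ a a)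
      =ᵐ[volume] fun ξ => t * ((Real.exp (-‖ξ‖ ^ 2) : ℝ) : ℂ) := by
    filter_upwards [Measure.ae_ne volume (0 : EuclideanSpace ℝ (Fin m))] with ξ hξ
    rw [← Finset.mul_sum, ← htr ξ hξ, Matrix.trace, mul_comm]
    rfl
  simp only [Matrix.trace, Matrix.diag, gaussAvg, Matrix.of_apply]
  rw [← Finset.mul_sum, ← integral_finsetSum _ fun a _ => hQ a, integral_congr_ae hae,
    integral_const_mul, mul_left_comm, integral_gaussian_eq_one, mul_one]

theorem ae_exp_neg_leadSymb_apply [NeZero m] {μ : Fin s → ℝ}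
    {Pi : Fin s → EuclideanSpace ℝ (Fin m) → Matrix (Fin d) (Fin d) ℂ}
    (horth : ∀ i j, i ≠ j → ∀ ξ, ξ ≠ 0 → Pi i ξ * Pi j ξ = 0)
    (hsum : ∀ ξ, ξ ≠ 0 → ∑ i, Pi i ξ = 1) (a b : Fin d) :
    (fun ξ => NormedSpace.exp (-leadSymb μ Pi ξ) a b)
      =ᵐ[volume] fun ξ => ∑ i, ((Real.exp (-(μ i * ‖ξ‖ ^ 2)) : ℝ) : ℂ) * Pi i ξ a b := by
  filter_upwards [Measure.ae_ne volume 0] with ξ hξ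
  rw [exp_neg_leadSymb (CompleteOrthogonalIdempotents.iff_ortho_complete.mpr
    ⟨fun i j hij => horth i j hij ξ hξ, hsum ξ hξ⟩)]
  simp [Matrix.sum_apply]

theorem integrable_gaussian_mul_apply [NeZero m]
    {Q : EuclideanSpace ℝ (Fin m) → Matrix (Fin d) (Fin d) ℂ} (hhom : IsZeroHomogeneous Q)
    (hcont : ContinuousOn Q {0}ᶜ) {c : ℝ} (hc : 0 < c) (a b : Fin d) :
    Integrable fun ξ => ((Real.exp (-(c * ‖ξ‖ ^ 2)) : ℝ) : ℂ) * Q ξ a b :=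
  (hhom.matrix_elem a b).integrable_gaussian_mul
    ((continuous_id.matrix_elem a b).comp_continuousOn hcont) hc

theorem integral_exp_neg_leadSymb_apply [NeZero m] {μ : Fin s → ℝ} (hμ : ∀ i, 0 < μ i)
    {Pi : Fin s → EuclideanSpace ℝ (Fin m) → Matrix (Fin d) (Fin d) ℂ}
    (hcont : ∀ i, ContinuousOn (Pi i) {0}ᶜ) (hhom : ∀ i, IsZeroHomogeneous (Pi i))
    (horth : ∀ i j, i ≠ j → ∀ ξ, ξ ≠ 0 → Pi i ξ * Pi j ξ = 0)
    (hsum : ∀ ξ, ξ ≠ 0 → ∑ i, Pi i ξ = 1) (a b : Fin d) :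
    ((Real.pi ^ (-(m : ℝ) / 2) : ℝ) : ℂ) * ∫ ξ, NormedSpace.exp (-leadSymb μ Pi ξ) a b
      = (∑ i, (((μ i ^ (-(m : ℝ) / 2) : ℝ)) : ℂ) • gaussAvg (Pi i)) a b := by
  rw [integral_congr_ae (ae_exp_neg_leadSymb_apply horth hsum a b),
    integral_finsetSum _ fun i _ => integrable_gaussian_mul_apply (hhom i) (hcont i) (hμ i) a b,
    Finset.mul_sum, Matrix.sum_apply]
  refine Finset.sum_congr rfl fun i _ => ?_
  rw [((hhom i).matrix_elem a b).integral_gaussian_mul (hμ i),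
    finrank_euclideanSpace_fin]
  simp only [Matrix.smul_apply, gaussAvg, Matrix.of_apply, smul_eq_mul]
  ring

theorem leading_heat_coefficient_general (m d s : ℕ) (hm : 1 ≤ m)
    (μ : Fin s → ℝ) (hμ : ∀ i, 0 < μ i) (dd : Fin s → ℕ)
    (Pi : Fin s → EuclideanSpace ℝ (Fin m) → Matrix (Fin d) (Fin d) ℂ)
    (hcont : ∀ i, ContinuousOn (Pi i) {(0 : EuclideanSpace ℝ (Fin m))}ᶜ)
    (hhom : ∀ i, ∀ c : ℝ, 0 < c → ∀ ξ : EuclideanSpace ℝ (Fin m), ξ ≠ 0 →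
      Pi i (c • ξ) = Pi i ξ)
    (horth : ∀ i j, i ≠ j → ∀ ξ : EuclideanSpace ℝ (Fin m), ξ ≠ 0 → Pi i ξ * Pi j ξ = 0)
    (hsum : ∀ ξ : EuclideanSpace ℝ (Fin m), ξ ≠ 0 → ∑ i, Pi i ξ = 1)
    (htr : ∀ i, ∀ ξ : EuclideanSpace ℝ (Fin m), ξ ≠ 0 → (Pi i ξ).trace = (dd i : ℂ)) :
    (∀ a b : Fin d, Integrable (fun ξ : EuclideanSpace ℝ (Fin m) =>
        (NormedSpace.exp (-leadSymb μ Pi ξ)) a b)) ∧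
    (∀ a b : Fin d,
        ((Real.pi ^ (-(m : ℝ) / 2) : ℝ) : ℂ)
            * ∫ ξ : EuclideanSpace ℝ (Fin m), (NormedSpace.exp (-leadSymb μ Pi ξ)) a b
          = (∑ i, (((μ i ^ (-(m : ℝ) / 2) : ℝ)) : ℂ) • gaussAvg (Pi i)) a b) ∧
    ((Real.pi ^ (-(m : ℝ) / 2) : ℝ) : ℂ)
        * ∫ ξ : EuclideanSpace ℝ (Fin m), (NormedSpace.exp (-leadSymb μ Pi ξ)).trace
      = ∑ i, (dd i : ℂ) * (((μ i ^ (-(m : ℝ) / 2) : ℝ)) : ℂ) := by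
  have : NeZero m := ⟨by omega⟩
  have hintegrable (a b : Fin d) : Integrable fun ξ => NormedSpace.exp (-leadSymb μ Pi ξ) a b :=
    (integrable_finsetSum _ fun i _ => integrable_gaussian_mul_apply (hhom i) (hcont i) (hμ i) a b)
      |>.congr (ae_exp_neg_leadSymb_apply horth hsum a b).symm
  have hintegral := integral_exp_neg_leadSymb_apply hμ hcont hhom horth hsum
  have hdiag (i : Fin s) (a : Fin d) :=
    integrable_gaussian_mul_apply (hhom i) (hcont i) one_pos a a
  have htrace_avg (i : Fin s) : (gaussAvg (Pi i)).trace = dd i :=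
    trace_gaussAvg (fun a => by simpa using hdiag i a) (htr i)
  refine ⟨hintegrable, hintegral, ?_⟩
  calc _ = ∑ a, ((Real.pi ^ (-(m : ℝ) / 2) : ℝ) : ℂ)
          * ∫ ξ, NormedSpace.exp (-leadSymb μ Pi ξ) a a := by
        rw [Matrix.integral_trace fun a => hintegrable a a, Finset.mul_sum]
    _ = (∑ i, (((μ i ^ (-(m : ℝ) / 2) : ℝ)) : ℂ) • gaussAvg (Pi i)).trace :=
        Finset.sum_congr rfl fun a _ => hintegral a a
    _ = _ := by simp [Matrix.trace_sum, htrace_avg, mul_comm]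

/-- Leading heat kernel coefficient `a₀` of a non-Laplace type operator:
`π^{−m/2} ∫ exp(−A(ξ)) dξ = ∑ᵢ μᵢ^{−m/2} ⟨Πᵢ⟩` (entrywise), and taking traces,
`π^{−m/2} ∫ tr exp(−A(ξ)) dξ = ∑ᵢ dᵢ μᵢ^{−m/2}`. -/
theorem leading_heat_coefficient (m d s : ℕ) (hm : 1 ≤ m) (hd : 1 ≤ d) (hs : 1 ≤ s)
    (μ : Fin s → ℝ) (hμ : ∀ i, 0 < μ i) (dd : Fin s → ℕ)
    (Pi : Fin s → EuclideanSpace ℝ (Fin m) → Matrix (Fin d) (Fin d) ℂ)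
    (hcont : ∀ i, ContinuousOn (Pi i) {(0 : EuclideanSpace ℝ (Fin m))}ᶜ)
    (hhom : ∀ i, ∀ c : ℝ, 0 < c → ∀ ξ : EuclideanSpace ℝ (Fin m), ξ ≠ 0 →
      Pi i (c • ξ) = Pi i ξ)
    (hidem : ∀ i, ∀ ξ : EuclideanSpace ℝ (Fin m), ξ ≠ 0 → Pi i ξ * Pi i ξ = Pi i ξ)
    (horth : ∀ i j, i ≠ j → ∀ ξ : EuclideanSpace ℝ (Fin m), ξ ≠ 0 → Pi i ξ * Pi j ξ = 0)
    (hsum : ∀ ξ : EuclideanSpace ℝ (Fin m), ξ ≠ 0 → ∑ i, Pi i ξ = 1)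
    (htr : ∀ i, ∀ ξ : EuclideanSpace ℝ (Fin m), ξ ≠ 0 → (Pi i ξ).trace = (dd i : ℂ)) :
    (∀ a b : Fin d, Integrable (fun ξ : EuclideanSpace ℝ (Fin m) =>
        (NormedSpace.exp (-leadSymb μ Pi ξ)) a b)) ∧
    (∀ a b : Fin d,
        ((Real.pi ^ (-(m : ℝ) / 2) : ℝ) : ℂ)
            * ∫ ξ : EuclideanSpace ℝ (Fin m), (NormedSpace.exp (-leadSymb μ Pi ξ)) a b
          = (∑ i, (((μ i ^ (-(m : ℝ) / 2) : ℝ)) : ℂ) • gaussAvg (Pi i)) a b) ∧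
    ((Real.pi ^ (-(m : ℝ) / 2) : ℝ) : ℂ)
        * ∫ ξ : EuclideanSpace ℝ (Fin m), (NormedSpace.exp (-leadSymb μ Pi ξ)).trace
      = ∑ i, (dd i : ℂ) * (((μ i ^ (-(m : ℝ) / 2) : ℝ)) : ℂ) :=
  leading_heat_coefficient_general m d s hm μ hμ dd Pi hcont hhom horth hsum htr

end NLT
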